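/- Let 𝒜 be an infinite independent family of subsets of ω. Then the following are equivalent: (1) for every X ⊆ ω with X ∉ 𝒜 and every h ∈ FF(𝒜) there is h' ∈ FF(𝒜) extending h such that 𝒜^{h'} ∩ X is finite or 𝒜^{h'} ∖ X is finite; (3) for every X ⊆ ω with X ∉ fil(𝒜) there is h ∈ FF(𝒜) such that X ⊆ ω ∖ 𝒜^h. -/

import Mathlib

/-- `FF 𝒜`: finite partial functions from `𝒜` to `{0,1}` (modelled as
`Set ℕ → Option Bool`) with finite non-empty domain contained in `𝒜`. -/
def FF (𝒜 : Set (Set ℕ)) : Set (Set ℕ → Option Bool) :=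
  {h | {A | h A ≠ none}.Finite ∧ {A | h A ≠ none}.Nonempty ∧ {A | h A ≠ none} ⊆ 𝒜}

/-- `h'` extends `h` as partial functions. -/
def PFunExtends (h h' : Set ℕ → Option Bool) : Prop :=
  ∀ (A : Set ℕ) (b : Bool), h A = some b → h' A = some b

/-- The boolean combination `𝒜^h`. -/
def comb (h : Set ℕ → Option Bool) : Set ℕ :=
  {n | ∀ A : Set ℕ, (h A = some true → n ∈ A) ∧ (h A = some false → n ∉ A)}

/-- `𝒜` is an independent family: all members are infinite, and for all
disjoint finite non-empty subfamilies `B`, `C` of `𝒜`,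
`(⋂ B) \ (⋃ C)` is infinite. -/
def IndepFamily (𝒜 : Set (Set ℕ)) : Prop :=
  (∀ A ∈ 𝒜, A.Infinite) ∧
  ∀ B C : Finset (Set ℕ), ↑B ⊆ 𝒜 → ↑C ⊆ 𝒜 → B.Nonempty → C.Nonempty →
    Disjoint B C →
      ((⋂ A ∈ (B : Set (Set ℕ)), A) \ (⋃ A ∈ (C : Set (Set ℕ)), A)).Infinite

/-- The density ideal `id(𝒜)`. -/
def densityIdeal (𝒜 : Set (Set ℕ)) : Set (Set ℕ) :=
  {X | ∀ h ∈ FF 𝒜, ∃ h' ∈ FF 𝒜, PFunExtends h h' ∧ comb h' ∩ X = ∅}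

/-- The density filter `fil(𝒜)`. -/
def densityFilter (𝒜 : Set (Set ℕ)) : Set (Set ℕ) :=
  {Y | ∀ h ∈ FF 𝒜, ∃ h' ∈ FF 𝒜, PFunExtends h h' ∧ comb h' ⊆ Y}

/-- `𝒜` is densely maximal. -/
def DenselyMaximal (𝒜 : Set (Set ℕ)) : Prop :=
  ∀ X : Set ℕ, X ∉ 𝒜 → ∀ h ∈ FF 𝒜, ∃ h' ∈ FF 𝒜, PFunExtends h h' ∧
    ((comb h' ∩ X).Finite ∨ (comb h' \ X).Finite)

/-- `F` is a p-set. -/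
def IsPSet (F : Set (Set ℕ)) : Prop :=
  ∀ F0 ⊆ F, F0.Countable → ∃ C ∈ F, ∀ X ∈ F0, (C \ X).Finite

/-- A partition of `ω` into finite sets. -/
def IsFinPartition (E : Set (Set ℕ)) : Prop :=
  (∀ e ∈ E, e.Finite) ∧ ⋃₀ E = Set.univ ∧ E.PairwiseDisjoint (id : Set ℕ → Set ℕ)

/-- `F` is a q-set: every partition of `ω` into finite sets has a
semi-selector in `F`. -/
def IsQSet (F : Set (Set ℕ)) : Prop :=
  ∀ E : Set (Set ℕ), IsFinPartition E → ∃ C ∈ F, ∀ e ∈ E, (e ∩ C).Subsingleton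

/-- A selective independent family. -/
def Selective (𝒜 : Set (Set ℕ)) : Prop :=
  IndepFamily 𝒜 ∧ DenselyMaximal 𝒜 ∧
    IsPSet (densityFilter 𝒜) ∧ IsQSet (densityFilter 𝒜)

/-- The boolean combination `ℬ^t` along an enumeration `B` of a countable
family, for a finite binary string `t`. -/
def strComb (B : ℕ → Set ℕ) (t : List Bool) : Set ℕ :=
  {m | ∀ i : Fin t.length, (t.get i = true → m ∈ B i) ∧ (t.get i = false → m ∉ B i)}

/-- `K ⊆ 2^{<ω}` is dense: every string has an (end-)extension in `K`. -/
def DenseStrings (K : Set (List Bool)) : Prop :=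
  ∀ s : List Bool, ∃ t ∈ K, s <+: t

/-!
Two facts about an infinite independent family drive both directions. Since every boolean
combination `𝒜^h` is infinite, `𝒜^{h₀} ⊆ 𝒜^h` forces `h₀` to extend `h`: otherwise `h₀` could be
extended to a combination disagreeing with `h` at some `A ∈ dom h`. And since `𝒜` is infinite,
any finitely many points can be removed from `𝒜^h` by extending `h` with fresh members of `𝒜`.
Thus "finite" in (1) may be replaced by "empty", and (1) ⇒ (3) follows (for `X ∈ 𝒜` take
`h = {X ↦ 0}`). For (3) ⇒ (1) apply (3) to `X ∪ (ω ∖ 𝒜^h)`: if it lies in `fil(𝒜)`, some `𝒜^{h'}`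
with `h' ⊇ h` lies inside `X`; otherwise some `𝒜^{h₀}` is disjoint from it, so
`𝒜^{h₀} ⊆ 𝒜^h ∖ X` and `h₀` extends `h`.
-/

theorem PFunExtends.rfl {h : Set ℕ → Option Bool} : PFunExtends h h := fun _ _ hb => hb

theorem PFunExtends.trans {h h' h'' : Set ℕ → Option Bool} (h₁ : PFunExtends h h')
    (h₂ : PFunExtends h' h'') : PFunExtends h h'' :=
  fun A b hb => h₂ A b (h₁ A b hb)

theorem mem_iff_of_mem_comb {h : Set ℕ → Option Bool} {n : ℕ} (hn : n ∈ comb h) {A : Set ℕ}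
    {b : Bool} (hA : h A = some b) : n ∈ A ↔ b = true := by
  cases b
  · simpa using (hn A).2 hA
  · simpa using (hn A).1 hA

theorem comb_anti {h h' : Set ℕ → Option Bool} (he : PFunExtends h h') : comb h' ⊆ comb h :=
  fun _ hn A => ⟨fun hA => (hn A).1 (he A true hA), fun hA => (hn A).2 (he A false hA)⟩

section Update

variable [DecidableEq (Set ℕ)] {h : Set ℕ → Option Bool} {A : Set ℕ}

theorem setOf_update_ne_none (b : Bool) :
    {B | Function.update h A (some b) B ≠ none} = insert A {B | h B ≠ none} := by
  ext B
  by_cases hB : B = A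
  · subst hB; simp
  · simp [hB]

theorem update_mem_FF {𝒜 : Set (Set ℕ)} (hfin : {B | h B ≠ none}.Finite)
    (hsub : {B | h B ≠ none} ⊆ 𝒜) (hA : A ∈ 𝒜) (b : Bool) :
    Function.update h A (some b) ∈ FF 𝒜 := by
  rw [FF, Set.mem_ofPred_eq, setOf_update_ne_none]
  exact ⟨hfin.insert A, Set.insert_nonempty _ _, Set.insert_subset hA hsub⟩

theorem pfunExtends_update (hA : h A = none) (b : Bool) :
    PFunExtends h (Function.update h A (some b)) := by
  intro B c hB
  have hBA : B ≠ A := by rintro rfl; simp [hA] at hB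
  rwa [Function.update_of_ne hBA]

theorem comb_update_subset (b : Bool) :
    comb (Function.update h A (some b)) ⊆ {n | n ∈ A ↔ b = true} :=
  fun _ hn => mem_iff_of_mem_comb hn (Function.update_self A (some b) h)

end Update

section InfiniteFamily

variable {𝒜 : Set (Set ℕ)} {h : Set ℕ → Option Bool}

theorem exists_extends_not_mem_comb (hinf : 𝒜.Infinite) (hh : h ∈ FF 𝒜) (n : ℕ) :
    ∃ h' ∈ FF 𝒜, PFunExtends h h' ∧ n ∉ comb h' := by
  classical
  obtain ⟨A, hA𝒜, hA⟩ := hinf.exists_notMem_finite hh.1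
  replace hA : h A = none := by simpa using hA
  refine ⟨_, update_mem_FF hh.1 hh.2.2 hA𝒜 (decide (n ∉ A)), pfunExtends_update hA _,
    fun hn => ?_⟩
  have := comb_update_subset _ hn
  simp only [Set.mem_ofPred_eq, decide_eq_true_eq] at this
  tauto

theorem exists_extends_disjoint_comb_of_finite (hinf : 𝒜.Infinite) (hh : h ∈ FF 𝒜) {F : Set ℕ}
    (hF : F.Finite) : ∃ h' ∈ FF 𝒜, PFunExtends h h' ∧ Disjoint (comb h') F := by
  induction F, hF using Set.Finite.induction_on with
  | empty => exact ⟨h, hh, .rfl, Set.disjoint_empty _⟩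
  | @insert a s _ _ ih =>
    obtain ⟨h', hh', hext, hdisj⟩ := ih
    obtain ⟨h'', hh'', hext', ha⟩ := exists_extends_not_mem_comb hinf hh' a
    refine ⟨h'', hh'', hext.trans hext', ?_⟩
    rw [Set.disjoint_insert_right]
    exact ⟨ha, hdisj.mono_left (comb_anti hext')⟩

theorem exists_extends_disjoint_comb_of_inter_finite (hinf : 𝒜.Infinite) (hh : h ∈ FF 𝒜)
    {X : Set ℕ} (hX : (comb h ∩ X).Finite) :
    ∃ h' ∈ FF 𝒜, PFunExtends h h' ∧ Disjoint (comb h') X := by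
  obtain ⟨h', hh', hext, hdisj⟩ := exists_extends_disjoint_comb_of_finite hinf hh hX
  refine ⟨h', hh', hext, Set.disjoint_left.mpr fun n hn hnX => ?_⟩
  exact Set.disjoint_left.mp hdisj hn ⟨comb_anti hext hn, hnX⟩

theorem exists_extends_comb_subset_of_diff_finite (hinf : 𝒜.Infinite) (hh : h ∈ FF 𝒜)
    {X : Set ℕ} (hX : (comb h \ X).Finite) :
    ∃ h' ∈ FF 𝒜, PFunExtends h h' ∧ comb h' ⊆ X := by
  simpa only [Set.disjoint_compl_right_iff_subset] using
    exists_extends_disjoint_comb_of_inter_finite hinf hh (X := Xᶜ) hX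

theorem IndepFamily.comb_infinite (hind : IndepFamily 𝒜) (hinf : 𝒜.Infinite) (hh : h ∈ FF 𝒜) :
    (comb h).Infinite := by
  obtain ⟨hfin, -, hsub⟩ := hh
  -- independence only speaks about non-empty subfamilies, so pad both sides with fresh members
  obtain ⟨A₀, hA₀𝒜, hA₀⟩ := hinf.exists_notMem_finite hfin
  obtain ⟨A₁, hA₁𝒜, hA₁⟩ := hinf.exists_notMem_finite (hfin.insert A₀)
  simp only [Set.mem_insert_iff, Set.mem_ofPred_eq, not_or, not_not] at hA₀ hA₁
  have hpos : {A | h A = some true}.Finite := hfin.subset fun A hA => by simp_all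
  have hneg : {A | h A = some false}.Finite := hfin.subset fun A hA => by simp_all
  have key := hind.2 (insert A₀ hpos.toFinset) (insert A₁ hneg.toFinset) ?_ ?_
    (Finset.insert_nonempty _ _) (Finset.insert_nonempty _ _) ?_
  · refine key.mono fun n hn A => ⟨fun hA => ?_, fun hA hnA => ?_⟩
    · exact Set.mem_iInter₂.mp hn.1 A (by simp [hA])
    · exact hn.2 (Set.mem_biUnion (by simp [hA]) hnA)
  · simp only [Finset.coe_insert, Set.Finite.coe_toFinset]
    exact Set.insert_subset hA₀𝒜 fun A hA => hsub (by simp_all)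
  · simp only [Finset.coe_insert, Set.Finite.coe_toFinset]
    exact Set.insert_subset hA₁𝒜 fun A hA => hsub (by simp_all)
  · rw [← Finset.disjoint_coe]
    simp only [Finset.coe_insert, Set.Finite.coe_toFinset, Set.disjoint_insert_left,
      Set.disjoint_insert_right]
    refine ⟨by simp [hA₁], by simp [hA₀], Set.disjoint_left.mpr fun A hA hA' => ?_⟩
    simp_all

theorem IndepFamily.pfunExtends_of_comb_subset (hind : IndepFamily 𝒜) (hinf : 𝒜.Infinite)
    {h₀ : Set ℕ → Option Bool} (hh : h ∈ FF 𝒜) (hh₀ : h₀ ∈ FF 𝒜) (hsub : comb h₀ ⊆ comb h) :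
    PFunExtends h h₀ := by
  classical
  intro A b hA
  cases hA₀ : h₀ A with
  | some b₀ =>
    obtain ⟨n, hn⟩ := (hind.comb_infinite hinf hh₀).nonempty
    have h₁ := mem_iff_of_mem_comb hn hA₀
    rw [mem_iff_of_mem_comb (hsub hn) hA] at h₁
    cases b <;> cases b₀ <;> simp_all
  | none =>
    have hA𝒜 : A ∈ 𝒜 := hh.2.2 (by simp [hA])
    have hext := pfunExtends_update hA₀ (!b)
    obtain ⟨n, hn⟩ := (hind.comb_infinite hinf (update_mem_FF hh₀.1 hh₀.2.2 hA𝒜 (!b))).nonempty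
    have h₁ := comb_update_subset _ hn
    have h₂ := mem_iff_of_mem_comb (hsub (comb_anti hext hn)) hA
    cases b <;> simp_all

end InfiniteFamily

theorem stmt_2 (𝒜 : Set (Set ℕ)) (hinf : 𝒜.Infinite) (hind : IndepFamily 𝒜) :
    (∀ X : Set ℕ, X ∉ 𝒜 → ∀ h ∈ FF 𝒜, ∃ h' ∈ FF 𝒜, PFunExtends h h' ∧
        ((comb h' ∩ X).Finite ∨ (comb h' \ X).Finite)) ↔
    (∀ X : Set ℕ, X ∉ densityFilter 𝒜 → ∃ h ∈ FF 𝒜, X ⊆ (comb h)ᶜ) := by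
  classical
  constructor
  · intro hdm X hX
    by_cases hX𝒜 : X ∈ 𝒜
    · refine ⟨_, update_mem_FF (h := fun _ => none) (by simp) (by simp) hX𝒜 false,
        fun n hnX hn => ?_⟩
      simpa [hnX] using comb_update_subset false hn
    obtain ⟨h, hh, hbad⟩ : ∃ h ∈ FF 𝒜, ∀ h' ∈ FF 𝒜, PFunExtends h h' → ¬comb h' ⊆ X := by
      simpa [densityFilter] using hX
    obtain ⟨h', hh', hext, hfin | hfin⟩ := hdm X hX𝒜 h hh
    · obtain ⟨h'', hh'', -, hdisj⟩ := exists_extends_disjoint_comb_of_inter_finite hinf hh' hfin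
      exact ⟨h'', hh'', hdisj.symm.subset_compl_right⟩
    · obtain ⟨h'', hh'', hext', hsub⟩ := exists_extends_comb_subset_of_diff_finite hinf hh' hfin
      exact absurd hsub (hbad h'' hh'' (hext.trans hext'))
  · intro h3 X _ h hh
    by_cases hY : X ∪ (comb h)ᶜ ∈ densityFilter 𝒜
    · obtain ⟨h', hh', hext, hsub⟩ := hY h hh
      have hX : comb h' ⊆ X := fun n hn =>
        (hsub hn).resolve_right (not_not.mpr (comb_anti hext hn))
      exact ⟨h', hh', hext, Or.inr (Set.finite_empty.subset fun n hn => hn.2 (hX hn.1))⟩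
    · obtain ⟨h₀, hh₀, hsub⟩ := h3 _ hY
      rw [Set.union_subset_iff, Set.compl_subset_compl] at hsub
      refine ⟨h₀, hh₀, hind.pfunExtends_of_comb_subset hinf hh hh₀ hsub.2, Or.inl ?_⟩
      exact Set.finite_empty.subset fun n hn => hsub.1 hn.2 hn.1
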